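/- The number of integer vectors z in Z^n with squared Euclidean norm at most μ is at most 2·(μ + n/4)^{n/2}·π^{n/2}/(n/2)!, i.e., twice the volume of the Euclidean ball of radius √(μ + n/4) in R^n. -/

import Mathlib

/-!
Attach to each lattice point `z` the half of the unit cube centred at `z` on which
`⟪x - z, z⟫ ≤ 0`. Reflection through `z` swaps the two halves, so each has volume at least `1/2`;
distinct cubes overlap only in null sets; and on the half-cube
`‖x‖² = ‖z‖² + 2⟪x - z, z⟫ + ‖x - z‖² ≤ μ + n/4`. Hence the half-cubes pack into the ball of
radius `√(μ + n/4)`, whose volume is at least half the number of points.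
-/

open Real Finset MeasureTheory ENNReal

section HalfCube

variable {ι : Type*} [Fintype ι]

def halfCube (c : ι → ℝ) : Set (ι → ℝ) :=
  Set.Icc (fun i => c i - 1 / 2) (fun i => c i + 1 / 2) ∩ {x | ∑ i, (x i - c i) * c i ≤ 0}

lemma measurableSet_halfCube (c : ι → ℝ) : MeasurableSet (halfCube c) :=
  measurableSet_Icc.inter <| measurableSet_le
    (Finset.measurable_sum _ fun i _ => ((measurable_pi_apply i).sub_const _).mul_const _)
    measurable_const

lemma one_le_two_mul_volume_halfCube (c : ι → ℝ) : 1 ≤ 2 * volume (halfCube c) := by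
  set Q := Set.Icc (fun i => c i - 1 / 2) (fun i => c i + 1 / 2)
  have hQ : volume Q = 1 := by
    simp only [Q, Real.volume_Icc_pi]
    norm_num
  have hcover : Q ⊆ halfCube c ∪ ((2 : ℝ) • c - ·) ⁻¹' halfCube c := by
    intro x hx
    by_cases hle : ∑ i, (x i - c i) * c i ≤ 0
    · exact Or.inl ⟨hx, hle⟩
    · refine Or.inr ⟨⟨fun i => ?_, fun i => ?_⟩, ?_⟩
      · simp only [Pi.sub_apply, Pi.smul_apply, smul_eq_mul]; linarith [hx.2 i]
      · simp only [Pi.sub_apply, Pi.smul_apply, smul_eq_mul]; linarith [hx.1 i]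
      · have hneg : ∑ i, (((2 : ℝ) • c - x) i - c i) * c i = -∑ i, (x i - c i) * c i := by
          rw [← Finset.sum_neg_distrib]
          refine Finset.sum_congr rfl fun i _ => ?_
          simp only [Pi.sub_apply, Pi.smul_apply, smul_eq_mul]
          ring
        simp only [Set.mem_ofPred_eq, hneg]
        linarith
  calc (1 : ℝ≥0∞) = volume Q := hQ.symm
    _ ≤ volume (halfCube c) + volume (((2 : ℝ) • c - ·) ⁻¹' halfCube c) :=
      (measure_mono hcover).trans (measure_union_le _ _)
    _ = 2 * volume (halfCube c) := by
      rw [(Measure.measurePreserving_sub_left volume ((2 : ℝ) • c)).measure_preimage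
        (measurableSet_halfCube c).nullMeasurableSet, two_mul]

lemma aedisjoint_halfCube {c d : ι → ℝ} {i : ι} (h : 1 ≤ |c i - d i|) :
    AEDisjoint volume (halfCube c) (halfCube d) := by
  refine measure_mono_null (fun x hx => ?_) (Measure.pi_hyperplane (fun _ : ι => volume) i ((c i + d i) / 2))
  obtain ⟨⟨⟨hc₁, hc₂⟩, -⟩, ⟨⟨hd₁, hd₂⟩, -⟩⟩ := hx
  show x i = (c i + d i) / 2
  have := hc₁ i; have := hc₂ i; have := hd₁ i; have := hd₂ i
  rcases abs_cases (c i - d i) with ⟨habs, -⟩ | ⟨habs, -⟩ <;> linarith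

lemma sum_sq_le_of_mem_halfCube {c x : ι → ℝ} (hx : x ∈ halfCube c) :
    ∑ i, x i ^ 2 ≤ ∑ i, c i ^ 2 + Fintype.card ι / 4 := by
  obtain ⟨⟨hlo, hhi⟩, hcross⟩ := hx
  have hsq : ∑ i, (x i - c i) ^ 2 ≤ Fintype.card ι / 4 := by
    calc ∑ i, (x i - c i) ^ 2 ≤ ∑ _i : ι, (1 / 4 : ℝ) :=
          Finset.sum_le_sum fun i _ => by nlinarith [hlo i, hhi i]
      _ = Fintype.card ι / 4 := by simp [div_eq_mul_inv]
  have hexpand : ∑ i, x i ^ 2 =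
      ∑ i, (x i - c i) ^ 2 + 2 * ∑ i, (x i - c i) * c i + ∑ i, c i ^ 2 := by
    rw [Finset.mul_sum, ← Finset.sum_add_distrib, ← Finset.sum_add_distrib]
    exact Finset.sum_congr rfl fun i _ => by ring
  linarith [hcross.out]

lemma halfCube_subset_preimage_closedBall {c : ι → ℝ} {μ : ℝ} (hc : ∑ i, c i ^ 2 ≤ μ) :
    halfCube c ⊆ WithLp.toLp 2 ⁻¹' Metric.closedBall 0 √(μ + Fintype.card ι / 4) := by
  intro x hx
  rw [Set.mem_preimage, mem_closedBall_zero_iff, ← abs_norm]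
  refine Real.abs_le_sqrt ?_
  rw [EuclideanSpace.real_norm_sq_eq]
  linarith [sum_sq_le_of_mem_halfCube hx]

lemma card_le_two_mul_volume_of_halfCube_subset (S : Finset (ι → ℤ)) {T : Set (ι → ℝ)}
    (hT : ∀ z ∈ S, halfCube (fun i => (z i : ℝ)) ⊆ T) : (#S : ℝ≥0∞) ≤ 2 * volume T := by
  set A : (ι → ℤ) → Set (ι → ℝ) := fun z => halfCube fun i => (z i : ℝ)
  have hdisj : (S : Set (ι → ℤ)).Pairwise (Function.onFun (AEDisjoint volume) A) := by
    intro z _ w _ hzw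
    obtain ⟨i, hi⟩ := Function.ne_iff.mp hzw
    refine aedisjoint_halfCube (i := i) ?_
    exact_mod_cast Int.one_le_abs (sub_ne_zero.mpr hi)
  calc (#S : ℝ≥0∞) = ∑ _z ∈ S, 1 := by simp
    _ ≤ ∑ z ∈ S, 2 * volume (A z) :=
      Finset.sum_le_sum fun z _ => one_le_two_mul_volume_halfCube _
    _ = 2 * volume (⋃ z ∈ S, A z) := by
      rw [measure_biUnion_finset₀ hdisj fun z _ => (measurableSet_halfCube _).nullMeasurableSet,
        Finset.mul_sum]
    _ ≤ 2 * volume T := by gcongr; exact Set.iUnion₂_subset hT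

end HalfCube

lemma EuclideanSpace.volume_real_closedBall (ι : Type*) [Fintype ι] [Nonempty ι]
    (x : EuclideanSpace ℝ ι) {r : ℝ} (hr : 0 ≤ r) :
    volume.real (Metric.closedBall x r) =
      r ^ Fintype.card ι * π ^ ((Fintype.card ι : ℝ) / 2) / Gamma (Fintype.card ι / 2 + 1) := by
  have hpow : √π ^ Fintype.card ι = π ^ ((Fintype.card ι : ℝ) / 2) := by
    rw [Real.sqrt_eq_rpow, ← Real.rpow_mul_natCast pi_pos.le]
    ring_nf
  rw [measureReal_def, EuclideanSpace.volume_closedBall, ENNReal.toReal_mul, ENNReal.toReal_pow,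
    ENNReal.toReal_ofReal hr, ENNReal.toReal_ofReal (by positivity), hpow, mul_div_assoc]

theorem stmt0 (n : ℕ) (hn : 1 ≤ n) (μ : ℝ)
    (S : Finset (Fin n → ℤ)) (hS : ∀ z ∈ S, (∑ i, ((z i : ℝ)) ^ 2) ≤ μ) :
    (S.card : ℝ) ≤ 2 * Real.sqrt (μ + n / 4) ^ n * Real.pi ^ ((n : ℝ) / 2) /
      Real.Gamma ((n : ℝ) / 2 + 1) := by
  have : Nonempty (Fin n) := ⟨⟨0, hn⟩⟩
  have hcount := card_le_two_mul_volume_of_halfCube_subset S fun z hz =>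
    halfCube_subset_preimage_closedBall (hS z hz)
  rw [(PiLp.volume_preserving_toLp (Fin n)).measure_preimage
    measurableSet_closedBall.nullMeasurableSet] at hcount
  have hreal := ENNReal.toReal_mono (ENNReal.mul_ne_top ENNReal.ofNat_ne_top
    measure_closedBall_lt_top.ne) hcount
  rw [ENNReal.toReal_mul, ← measureReal_def, EuclideanSpace.volume_real_closedBall _ _
    (Real.sqrt_nonneg _)] at hreal
  simpa [mul_div_assoc, mul_assoc] using hreal
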